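/- arXiv:0912.2500 — 4 statements merged into one kernel-verified Lean document; each statement's English description precedes it below -/
import Mathlib

section
/- Let E be a real Banach space, let r > 0, α ∈ (0, 1], and a, b ≥ 0, and suppose f : ℂ → E is differentiable at every point z with 0 < |z| ≤ r, with derivative satisfying ‖Df(z)‖ ≤ a·|z|^{α−1} + b for all z with 0 < |z| ≤ r. Then for all radii 0 < r₁ ≤ r₂ ≤ r and all angles θ₁, θ₂ ∈ [0, 2π]: ‖f(r₂·e^{iθ₂}) − f(r₁·e^{iθ₁})‖ ≤ (a/α)·(r₂^α − r₁^α) + b·(r₂ − r₁) + (a·r₁^α + b·r₁)·|θ₂ − θ₁|. -/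
/-!
Join `r₁ e^{iθ₁}` to `r₂ e^{iθ₂}` by the arc of radius `r₁` from angle `θ₁` to `θ₂`, followed by
the radial segment at angle `θ₂` from `r₁` to `r₂`, and apply the mean value inequality along each
piece. On the segment the bound `a ρ^(α-1) + b` is the derivative of
`(a/α) ρ^α + b ρ`; on the arc the speed is `r₁`, so the derivative is bounded by
`(a r₁^(α-1) + b) r₁ = a r₁^α + b r₁`.
-/

open Complex Set

section MeanValue

variable {E F : Type*} [NormedAddCommGroup E] [NormedSpace ℝ E]
  [NormedAddCommGroup F] [NormedSpace ℝ F]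

theorem norm_sub_le_sub_of_norm_deriv_le {g g' : ℝ → E} {B B' : ℝ → ℝ} {s t : ℝ} (hst : s ≤ t)
    (hg : ∀ τ ∈ Icc s t, HasDerivAt g (g' τ) τ) (hB : ∀ τ ∈ Icc s t, HasDerivAt B (B' τ) τ)
    (bound : ∀ τ ∈ Ico s t, ‖g' τ‖ ≤ B' τ) : ‖g t - g s‖ ≤ B t - B s :=
  image_norm_le_of_norm_deriv_right_le_deriv_boundary' (f := fun τ => g τ - g s)
    (B := fun τ => B τ - B s)
    (fun τ hτ => ((hg τ hτ).sub_const _).continuousAt.continuousWithinAt)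
    (fun τ hτ => ((hg τ (Ico_subset_Icc_self hτ)).sub_const _).hasDerivWithinAt) (by simp)
    (fun τ hτ => ((hB τ hτ).sub_const _).continuousAt.continuousWithinAt)
    (fun τ hτ => ((hB τ (Ico_subset_Icc_self hτ)).sub_const _).hasDerivWithinAt) bound
    (right_mem_Icc.2 hst)

theorem norm_comp_sub_le_sub_of_norm_fderiv_mul_le {f : F → E} {γ γ' : ℝ → F} {B B' : ℝ → ℝ}
    {s t : ℝ} (hst : s ≤ t) (hγ : ∀ τ ∈ Icc s t, HasDerivAt γ (γ' τ) τ)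
    (hf : ∀ τ ∈ Icc s t, DifferentiableAt ℝ f (γ τ)) (hB : ∀ τ ∈ Icc s t, HasDerivAt B (B' τ) τ)
    (bound : ∀ τ ∈ Ico s t, ‖fderiv ℝ f (γ τ)‖ * ‖γ' τ‖ ≤ B' τ) :
    ‖f (γ t) - f (γ s)‖ ≤ B t - B s :=
  norm_sub_le_sub_of_norm_deriv_le (g := f ∘ γ) hst
    (fun τ hτ => (hf τ hτ).hasFDerivAt.comp_hasDerivAt τ (hγ τ hτ)) hB
    (fun τ hτ => ((fderiv ℝ f (γ τ)).le_opNorm _).trans (bound τ hτ))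

theorem norm_comp_sub_le_of_norm_fderiv_mul_le {f : F → E} {γ γ' : ℝ → F} {C : ℝ}
    (hγ : ∀ τ, HasDerivAt γ (γ' τ) τ) (hf : ∀ τ, DifferentiableAt ℝ f (γ τ))
    (bound : ∀ τ, ‖fderiv ℝ f (γ τ)‖ * ‖γ' τ‖ ≤ C) (s t : ℝ) :
    ‖f (γ t) - f (γ s)‖ ≤ C * |t - s| := by
  simpa only [Function.comp_apply, Real.norm_eq_abs] using
    convex_univ.norm_image_sub_le_of_norm_hasDerivWithin_le (f := f ∘ γ)
      (fun τ _ => ((hf τ).hasFDerivAt.comp_hasDerivAt τ (hγ τ)).hasDerivWithinAt)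
      (fun τ _ => ((fderiv ℝ f (γ τ)).le_opNorm _).trans (bound τ)) (mem_univ s) (mem_univ t)

end MeanValue

theorem hasDerivAt_div_mul_rpow_add_mul (a b : ℝ) {α x : ℝ} (hα : α ≠ 0) (hx : x ≠ 0) :
    HasDerivAt (fun ρ : ℝ => a / α * ρ ^ α + b * ρ) (a * x ^ (α - 1) + b) x :=
  (((Real.hasDerivAt_rpow_const (p := α) (Or.inl hx)).const_mul (a / α)).add
    ((hasDerivAt_id x).const_mul b)).congr_deriv
    (by rw [mul_one, ← mul_assoc, div_mul_cancel₀ a hα])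

theorem norm_ofReal_mul_exp_ofReal_mul_I (ρ θ : ℝ) : ‖(ρ : ℂ) * exp (θ * I)‖ = |ρ| := by
  rw [norm_mul, norm_exp_ofReal_mul_I, norm_real, Real.norm_eq_abs, mul_one]

section Polar

variable {E : Type*} [NormedAddCommGroup E] [NormedSpace ℝ E]

theorem norm_sub_radial_le_of_norm_fderiv_le_rpow (f : ℂ → E) {a b α r₁ r₂ : ℝ} (θ : ℝ)
    (hα : α ≠ 0) (hr₁ : 0 < r₁) (h12 : r₁ ≤ r₂)
    (hf : ∀ ρ ∈ Icc r₁ r₂, DifferentiableAt ℝ f (ρ * exp (θ * I)))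
    (bound : ∀ ρ ∈ Icc r₁ r₂, ‖fderiv ℝ f (ρ * exp (θ * I))‖ ≤ a * ρ ^ (α - 1) + b) :
    ‖f (r₂ * exp (θ * I)) - f (r₁ * exp (θ * I))‖ ≤
      a / α * (r₂ ^ α - r₁ ^ α) + b * (r₂ - r₁) := by
  have hray : ∀ ρ : ℝ, HasDerivAt (fun t : ℝ => (t : ℂ) * exp (θ * I)) (exp (θ * I)) ρ :=
    fun ρ => by simpa using (ofRealCLM.hasDerivAt (x := ρ)).mul_const (exp (θ * I))
  have key := norm_comp_sub_le_sub_of_norm_fderiv_mul_le h12 (fun ρ _ => hray ρ) hf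
    (fun ρ hρ => hasDerivAt_div_mul_rpow_add_mul a b hα (hr₁.trans_le hρ.1).ne')
    (fun ρ hρ => by
      rw [norm_exp_ofReal_mul_I, mul_one]
      exact bound ρ (Ico_subset_Icc_self hρ))
  linarith

theorem norm_sub_arc_le_of_norm_fderiv_le (f : ℂ → E) {ρ M : ℝ} (hρ : 0 ≤ ρ)
    (hf : ∀ θ : ℝ, DifferentiableAt ℝ f (ρ * exp (θ * I)))
    (bound : ∀ θ : ℝ, ‖fderiv ℝ f (ρ * exp (θ * I))‖ ≤ M) (θ₁ θ₂ : ℝ) :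
    ‖f (ρ * exp (θ₂ * I)) - f (ρ * exp (θ₁ * I))‖ ≤ M * ρ * |θ₂ - θ₁| := by
  have harc : ∀ θ : ℝ, HasDerivAt (fun t : ℝ => (ρ : ℂ) * exp (t * I))
      (ρ * (exp (θ * I) * I)) θ := fun θ => by
    have hline : HasDerivAt (fun t : ℝ => (t : ℂ) * I) I θ := by
      simpa using (ofRealCLM.hasDerivAt (x := θ)).mul_const I
    exact hline.cexp.const_mul _
  refine norm_comp_sub_le_of_norm_fderiv_mul_le harc hf (fun θ => ?_) θ₁ θ₂
  rw [← mul_assoc, norm_mul, norm_ofReal_mul_exp_ofReal_mul_I, norm_I, mul_one, abs_of_nonneg hρ]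
  exact mul_le_mul_of_nonneg_right (bound θ) hρ

end Polar

theorem modulus_of_continuity_estimate_general
    {E : Type*} [NormedAddCommGroup E] [NormedSpace ℝ E]
    (r : ℝ) (α : ℝ) (hα0 : 0 < α)
    (a b : ℝ) (f : ℂ → E)
    (hdiff : ∀ z : ℂ, 0 < ‖z‖ → ‖z‖ ≤ r → DifferentiableAt ℝ f z)
    (hbound : ∀ z : ℂ, 0 < ‖z‖ → ‖z‖ ≤ r →
      ‖fderiv ℝ f z‖ ≤ a * ‖z‖ ^ (α - 1) + b) :
    ∀ r₁ r₂ θ₁ θ₂ : ℝ, 0 < r₁ → r₁ ≤ r₂ → r₂ ≤ r →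
      θ₁ ∈ Set.Icc (0 : ℝ) (2 * Real.pi) → θ₂ ∈ Set.Icc (0 : ℝ) (2 * Real.pi) →
      ‖f ((r₂ : ℂ) * Complex.exp (θ₂ * Complex.I)) -
          f ((r₁ : ℂ) * Complex.exp (θ₁ * Complex.I))‖ ≤
        a / α * (r₂ ^ α - r₁ ^ α) + b * (r₂ - r₁) +
          (a * r₁ ^ α + b * r₁) * |θ₂ - θ₁| := by
  intro r₁ r₂ θ₁ θ₂ hr₁ h12 h2r _ _
  have hpolar : ∀ ρ θ : ℝ, 0 < ρ → ρ ≤ r → DifferentiableAt ℝ f (ρ * exp (θ * I)) ∧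
      ‖fderiv ℝ f (ρ * exp (θ * I))‖ ≤ a * ρ ^ (α - 1) + b := by
    intro ρ θ hρ hρr
    have hnorm : ‖(ρ : ℂ) * exp (θ * I)‖ = ρ := by
      rw [norm_ofReal_mul_exp_ofReal_mul_I, abs_of_pos hρ]
    have hpos : 0 < ‖(ρ : ℂ) * exp (θ * I)‖ := by rwa [hnorm]
    have hle : ‖(ρ : ℂ) * exp (θ * I)‖ ≤ r := by rwa [hnorm]
    exact ⟨hdiff _ hpos hle, by simpa only [hnorm] using hbound _ hpos hle⟩
  have hradial := norm_sub_radial_le_of_norm_fderiv_le_rpow f θ₂ hα0.ne' hr₁ h12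
    (fun ρ hρ => (hpolar ρ θ₂ (hr₁.trans_le hρ.1) (hρ.2.trans h2r)).1)
    (fun ρ hρ => (hpolar ρ θ₂ (hr₁.trans_le hρ.1) (hρ.2.trans h2r)).2)
  have harc := norm_sub_arc_le_of_norm_fderiv_le f hr₁.le
    (fun θ => (hpolar r₁ θ hr₁ (h12.trans h2r)).1)
    (fun θ => (hpolar r₁ θ hr₁ (h12.trans h2r)).2) θ₁ θ₂
  have hspeed : (a * r₁ ^ (α - 1) + b) * r₁ = a * r₁ ^ α + b * r₁ := by
    rw [Real.rpow_sub_one hr₁.ne']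
    field_simp
  rw [hspeed] at harc
  exact (norm_sub_le_norm_sub_add_norm_sub _ _ _).trans (add_le_add hradial harc)

/-- Two-point modulus-of-continuity estimate from the removal-of-singularities proof:
if `f : ℂ → E` is differentiable on the punctured disc `0 < |z| ≤ r` with
`‖Df(z)‖ ≤ a |z|^(α-1) + b`, then for `0 < r₁ ≤ r₂ ≤ r` and `θ₁, θ₂ ∈ [0, 2π]`,
`‖f(r₂ e^{iθ₂}) - f(r₁ e^{iθ₁})‖ ≤ (a/α)(r₂^α - r₁^α) + b (r₂ - r₁)
  + (a r₁^α + b r₁)|θ₂ - θ₁|`. -/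
theorem modulus_of_continuity_estimate
    {E : Type*} [NormedAddCommGroup E] [NormedSpace ℝ E]
    (r : ℝ) (hr : 0 < r) (α : ℝ) (hα0 : 0 < α) (hα1 : α ≤ 1)
    (a b : ℝ) (ha : 0 ≤ a) (hb : 0 ≤ b) (f : ℂ → E)
    (hdiff : ∀ z : ℂ, 0 < ‖z‖ → ‖z‖ ≤ r → DifferentiableAt ℝ f z)
    (hbound : ∀ z : ℂ, 0 < ‖z‖ → ‖z‖ ≤ r →
      ‖fderiv ℝ f z‖ ≤ a * ‖z‖ ^ (α - 1) + b) :
    ∀ r₁ r₂ θ₁ θ₂ : ℝ, 0 < r₁ → r₁ ≤ r₂ → r₂ ≤ r →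
      θ₁ ∈ Set.Icc (0 : ℝ) (2 * Real.pi) → θ₂ ∈ Set.Icc (0 : ℝ) (2 * Real.pi) →
      ‖f ((r₂ : ℂ) * Complex.exp (θ₂ * Complex.I)) -
          f ((r₁ : ℂ) * Complex.exp (θ₁ * Complex.I))‖ ≤
        a / α * (r₂ ^ α - r₁ ^ α) + b * (r₂ - r₁) +
          (a * r₁ ^ α + b * r₁) * |θ₂ - θ₁| :=
  modulus_of_continuity_estimate_general r α hα0 a b f hdiff hbound
end

section
/- For every (v, w) ∈ ℂ × V one has ω̃((v, w), J̃(v, w)) ≥ ½·(c²·|v|² + ‖w + Xv‖²); in particular ω̃((v, w), J̃(v, w)) > 0 whenever (v, w) ≠ (0, 0), i.e. the form ω̃ tames the complex structure J̃. -/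
open scoped RealInnerProductSpace

/-- The two-form `ω̃ = c²·ω₀ ⊕ ω` on `ℂ × V`, where `ω₀` is the standard area form
on `ℂ` and `ω(x, y) = ⟪J x, y⟫` is the two-form on `V` associated to `J`. -/
noncomputable def omegaTilde {V : Type*} [NormedAddCommGroup V] [InnerProductSpace ℝ V]
    (J : V →L[ℝ] V) (c : ℝ) (p q : ℂ × V) : ℝ :=
  c ^ 2 * (p.1.re * q.1.im - p.1.im * q.1.re) + ⟪J p.2, q.2⟫

/-- The complex structure `J̃(v, w) = (i v, J w + J (X v) - X (i v))` on `ℂ × V`. -/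
noncomputable def Jtilde {V : Type*} [NormedAddCommGroup V] [InnerProductSpace ℝ V]
    (J : V →L[ℝ] V) (X : ℂ →L[ℝ] V) (p : ℂ × V) : ℂ × V :=
  (Complex.I * p.1, J p.2 + J (X p.1) - X (Complex.I * p.1))

/-!
Expanding the definitions, `ω̃((v, w), J̃(v, w)) = c²|v|² + ‖w‖² + ⟪w, X v⟫ - ⟪J w, X (i v)⟫`.
Subtracting `½ (c²|v|² + ‖w + X v‖²)` leaves `½ c²|v|² + ½ ‖w‖² - ⟪J w, X (i v)⟫ - ½ ‖X v‖²`,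
and Cauchy–Schwarz, `‖J w‖ = ‖w‖` and `‖X u‖ ≤ c |u| / 5` bound this from below by
`½ (‖w‖ - c |v| / 5)² + (23/50) c² |v|² ≥ 0`.
-/

section

variable {V : Type*} [NormedAddCommGroup V] [InnerProductSpace ℝ V]

theorem omegaTilde_Jtilde_eq {J : V →L[ℝ] V} (hJiso : ∀ x y : V, ⟪J x, J y⟫ = ⟪x, y⟫)
    (c : ℝ) (X : ℂ →L[ℝ] V) (v : ℂ) (w : V) :
    omegaTilde J c (v, w) (Jtilde J X (v, w)) =
      c ^ 2 * ‖v‖ ^ 2 + ‖w‖ ^ 2 + ⟪w, X v⟫ - ⟪J w, X (Complex.I * v)⟫ := by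
  simp only [omegaTilde, Jtilde, inner_add_right, inner_sub_right, hJiso,
    real_inner_self_eq_norm_sq, Complex.mul_im, Complex.mul_re, Complex.I_re,
    Complex.I_im, Complex.sq_norm, Complex.normSq_apply]
  ring

theorem half_le_omegaTilde_Jtilde {J : V →L[ℝ] V} (hJiso : ∀ x y : V, ⟪J x, J y⟫ = ⟪x, y⟫)
    {c : ℝ} {X : ℂ →L[ℝ] V} (hX : ∀ v : ℂ, ‖X v‖ ≤ c / 5 * ‖v‖) (v : ℂ) (w : V) :
    (1 / 2 : ℝ) * (c ^ 2 * ‖v‖ ^ 2 + ‖w + X v‖ ^ 2) ≤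
      omegaTilde J c (v, w) (Jtilde J X (v, w)) := by
  have hcross : ⟪J w, X (Complex.I * v)⟫ ≤ ‖w‖ * (c / 5 * ‖v‖) :=
    calc ⟪J w, X (Complex.I * v)⟫ ≤ ‖J w‖ * ‖X (Complex.I * v)‖ := real_inner_le_norm _ _
      _ ≤ ‖w‖ * (c / 5 * ‖v‖) := by
        rw [show ‖J w‖ = ‖w‖ from (J.toLinearMap.isometryOfInner hJiso).norm_map w]
        gcongr
        simpa using hX (Complex.I * v)
  have hXv_sq : ‖X v‖ ^ 2 ≤ (c / 5 * ‖v‖) ^ 2 := pow_le_pow_left₀ (norm_nonneg _) (hX v) 2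
  rw [omegaTilde_Jtilde_eq hJiso, norm_add_sq_real]
  linarith [sq_nonneg (‖w‖ - c / 5 * ‖v‖), sq_nonneg (c / 5 * ‖v‖)]

theorem sq_mul_norm_sq_add_norm_add_map_sq_pos {c : ℝ} (hc : c ≠ 0) (X : ℂ →L[ℝ] V)
    {v : ℂ} {w : V} (hvw : (v, w) ≠ 0) : 0 < c ^ 2 * ‖v‖ ^ 2 + ‖w + X v‖ ^ 2 := by
  rcases eq_or_ne v 0 with rfl | hv
  · have hw : w ≠ 0 := fun hw => hvw (by simp [hw])
    simpa using pow_pos (norm_pos_iff.mpr hw) 2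
  · have : 0 < c ^ 2 * ‖v‖ ^ 2 := by positivity
    positivity

end

theorem omegaTilde_tames_Jtilde_general
    {V : Type*} [NormedAddCommGroup V] [InnerProductSpace ℝ V]
    (J : V →L[ℝ] V)
    (hJiso : ∀ x y : V, ⟪J x, J y⟫ = ⟪x, y⟫)
    (c : ℝ) (hc : 1 < c)
    (X : ℂ →L[ℝ] V) (hX : ∀ v : ℂ, ‖X v‖ ≤ c / 5 * ‖v‖) :
    ∀ (v : ℂ) (w : V),
      (1 / 2 : ℝ) * (c ^ 2 * ‖v‖ ^ 2 + ‖w + X v‖ ^ 2) ≤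
        omegaTilde J c (v, w) (Jtilde J X (v, w)) ∧
      ((v, w) ≠ (0 : ℂ × V) → 0 < omegaTilde J c (v, w) (Jtilde J X (v, w))) := by
  intro v w
  have hle := half_le_omegaTilde_Jtilde hJiso hX v w
  refine ⟨hle, fun hvw => ?_⟩
  have hpos := sq_mul_norm_sq_add_norm_add_map_sq_pos (by positivity) X hvw
  linarith

/-- Pointwise content of Lemma 3.2: `ω̃((v,w), J̃(v,w)) ≥ ½ (c² |v|² + ‖w + X v‖²)`,
so in particular `ω̃` tames `J̃`. -/
theorem omegaTilde_tames_Jtilde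
    {V : Type*} [NormedAddCommGroup V] [InnerProductSpace ℝ V]
    (J : V →L[ℝ] V) (hJ2 : ∀ x : V, J (J x) = -x)
    (hJiso : ∀ x y : V, ⟪J x, J y⟫ = ⟪x, y⟫)
    (c : ℝ) (hc : 1 < c)
    (X : ℂ →L[ℝ] V) (hX : ∀ v : ℂ, ‖X v‖ ≤ c / 5 * ‖v‖) :
    ∀ (v : ℂ) (w : V),
      (1 / 2 : ℝ) * (c ^ 2 * ‖v‖ ^ 2 + ‖w + X v‖ ^ 2) ≤
        omegaTilde J c (v, w) (Jtilde J X (v, w)) ∧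
      ((v, w) ≠ (0 : ℂ × V) → 0 < omegaTilde J c (v, w) (Jtilde J X (v, w))) :=
  omegaTilde_tames_Jtilde_general J hJiso c hc X hX
end

section
/- For every (v, w) ∈ ℂ × V one has the two-sided comparison ½·(|v|² + ‖w + Xv‖²) ≤ ω̃((v, w), J̃(v, w)) ≤ 3c²·(|v|² + ‖w + Xv‖²). -/
open scoped RealInnerProductSpace

/-!
Writing `u = w + X v`, the quantity `ω̃((v,w), J̃(v,w))` equals `c²|v|² + ‖u‖²` up to the
cross terms `-⟪X v, u⟫` and `-⟪J w, X (i v)⟫`. Since `J` is an isometry and `X` has norm at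
most `a = c/5`, these are bounded by `2a|v|‖u‖ + a²|v|²`, which is small compared with
`c²|v|² + ‖u‖²`; for `c > 1` this leaves room for the constants `½` and `3c²`.
-/

section

variable {V : Type*} [NormedAddCommGroup V] [InnerProductSpace ℝ V]

theorem omegaTilde_Jtilde_self {J : V →L[ℝ] V} (hJ : ∀ x y : V, ⟪J x, J y⟫ = ⟪x, y⟫)
    (c : ℝ) (X : ℂ →L[ℝ] V) (v : ℂ) (w : V) :
    omegaTilde J c (v, w) (Jtilde J X (v, w)) =
      c ^ 2 * ‖v‖ ^ 2 + ⟪w, w + X v⟫ - ⟪J w, X (Complex.I * v)⟫ := by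
  simp only [omegaTilde, Jtilde, inner_sub_right, inner_add_right, hJ, Complex.mul_re,
    Complex.mul_im, Complex.I_re, Complex.I_im, Complex.sq_norm, Complex.normSq_apply]
  ring

theorem abs_omegaTilde_Jtilde_self_sub_le {J : V →L[ℝ] V}
    (hJ : ∀ x y : V, ⟪J x, J y⟫ = ⟪x, y⟫) (c : ℝ) {X : ℂ →L[ℝ] V} {a : ℝ}
    (hX : ∀ v : ℂ, ‖X v‖ ≤ a * ‖v‖) (v : ℂ) (w : V) :
    |omegaTilde J c (v, w) (Jtilde J X (v, w)) - (c ^ 2 * ‖v‖ ^ 2 + ‖w + X v‖ ^ 2)| ≤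
      2 * a * ‖v‖ * ‖w + X v‖ + a ^ 2 * ‖v‖ ^ 2 := by
  set u := w + X v
  have hw : w = u - X v := by simp [u]
  have hJw : ‖J w‖ = ‖w‖ := (J.toLinearMap.isometryOfInner hJ).norm_map w
  have hXiv : ‖X (Complex.I * v)‖ ≤ a * ‖v‖ := by simpa using hX (Complex.I * v)
  have hw_le : ‖w‖ ≤ ‖u‖ + a * ‖v‖ := hw ▸ (norm_sub_le u (X v)).trans (by gcongr; exact hX v)
  have ha : 0 ≤ a * ‖v‖ := (norm_nonneg _).trans (hX v)
  have hXvu : |⟪X v, u⟫| ≤ a * ‖v‖ * ‖u‖ :=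
    (abs_real_inner_le_norm _ _).trans (by gcongr; exact hX v)
  have hJwXiv : |⟪J w, X (Complex.I * v)⟫| ≤ (‖u‖ + a * ‖v‖) * (a * ‖v‖) :=
    (abs_real_inner_le_norm _ _).trans (by rw [hJw]; gcongr)
  have hsplit : omegaTilde J c (v, w) (Jtilde J X (v, w)) - (c ^ 2 * ‖v‖ ^ 2 + ‖u‖ ^ 2) =
      -(⟪X v, u⟫ + ⟪J w, X (Complex.I * v)⟫) := by
    rw [omegaTilde_Jtilde_self hJ, ← real_inner_self_eq_norm_sq u]
    nth_rewrite 1 [hw]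
    rw [inner_sub_left]
    ring
  rw [hsplit, abs_neg]
  exact (abs_add_le _ _).trans (by nlinarith)

end

theorem half_le_and_le_three_mul_of_abs_sub_le {c x y q : ℝ} (hc : 1 < c)
    (h : |q - (c ^ 2 * x ^ 2 + y ^ 2)| ≤ 2 * (c / 5) * x * y + (c / 5) ^ 2 * x ^ 2) :
    1 / 2 * (x ^ 2 + y ^ 2) ≤ q ∧ q ≤ 3 * c ^ 2 * (x ^ 2 + y ^ 2) := by
  obtain ⟨hlow, hupp⟩ := abs_le.mp h
  have hc2 : 0 ≤ c ^ 2 - 1 := by nlinarith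
  constructor
  · nlinarith [sq_nonneg (y - 2 * c / 5 * x), mul_nonneg (sq_nonneg x) hc2]
  · nlinarith [sq_nonneg (y - c * x), mul_nonneg (sq_nonneg y) hc2]

theorem omegaTilde_metric_comparison_general
    {V : Type*} [NormedAddCommGroup V] [InnerProductSpace ℝ V]
    (J : V →L[ℝ] V)
    (hJiso : ∀ x y : V, ⟪J x, J y⟫ = ⟪x, y⟫)
    (c : ℝ) (hc : 1 < c)
    (X : ℂ →L[ℝ] V) (hX : ∀ v : ℂ, ‖X v‖ ≤ c / 5 * ‖v‖) :
    ∀ (v : ℂ) (w : V),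
      (1 / 2 : ℝ) * (‖v‖ ^ 2 + ‖w + X v‖ ^ 2) ≤
          omegaTilde J c (v, w) (Jtilde J X (v, w)) ∧
      omegaTilde J c (v, w) (Jtilde J X (v, w)) ≤
          3 * c ^ 2 * (‖v‖ ^ 2 + ‖w + X v‖ ^ 2) := fun v w =>
  half_le_and_le_three_mul_of_abs_sub_le hc (abs_omegaTilde_Jtilde_self_sub_le hJiso c hX v w)

/-- Pointwise content of Lemma 3.3: the norm determined by `ω̃` and `J̃` is uniformly
comparable to `|v|² + ‖w + X v‖²`:
`½ (|v|² + ‖w + Xv‖²) ≤ ω̃((v,w), J̃(v,w)) ≤ 3 c² (|v|² + ‖w + Xv‖²)`. -/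
theorem omegaTilde_metric_comparison
    {V : Type*} [NormedAddCommGroup V] [InnerProductSpace ℝ V]
    (J : V →L[ℝ] V) (hJ2 : ∀ x : V, J (J x) = -x)
    (hJiso : ∀ x y : V, ⟪J x, J y⟫ = ⟪x, y⟫)
    (c : ℝ) (hc : 1 < c)
    (X : ℂ →L[ℝ] V) (hX : ∀ v : ℂ, ‖X v‖ ≤ c / 5 * ‖v‖) :
    ∀ (v : ℂ) (w : V),
      (1 / 2 : ℝ) * (‖v‖ ^ 2 + ‖w + X v‖ ^ 2) ≤
          omegaTilde J c (v, w) (Jtilde J X (v, w)) ∧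
      omegaTilde J c (v, w) (Jtilde J X (v, w)) ≤
          3 * c ^ 2 * (‖v‖ ^ 2 + ‖w + X v‖ ^ 2) :=
  omegaTilde_metric_comparison_general J hJiso c hc X hX
end

section
/- Let V be a real normed vector space and D ⊆ ℂ an open set. For each z ∈ D let J(z) : V → V be a continuous ℝ-linear map with J(z) ∘ J(z) = −id, and let X(z) : ℂ → V be a continuous ℝ-linear map. Define J̃(z) : ℂ × V → ℂ × V by J̃(z)(v, ξ) := (iv, J(z)ξ + J(z)(X(z)v) − X(z)(iv)). Then: (a) J̃(z) ∘ J̃(z) = −id for every z ∈ D, so each J̃(z) is a linear complex structure on ℂ × V; and (b) if u : D → V is differentiable and satisfies the first vortex equation J(z)(Du(z)(v) + X(z)(v)) = Du(z)(iv) + X(z)(iv) for all z ∈ D and v ∈ ℂ, then the graph map ũ : D → ℂ × V defined by ũ(z) := (z, u(z)) is differentiable and satisfies Dũ(z)(iv) = J̃(z)(Dũ(z)(v)) for all z ∈ D and v ∈ ℂ, i.e. ũ is holomorphic with respect to the family J̃. -/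
noncomputable def JtildeFam {V : Type*} [NormedAddCommGroup V] [NormedSpace ℝ V]
    (J : ℂ → V →L[ℝ] V) (X : ℂ → ℂ →L[ℝ] V) (z : ℂ) (p : ℂ × V) : ℂ × V :=
  (Complex.I * p.1, J z p.2 + J z (X z p.1) - X z (Complex.I * p.1))

/-! With the shear `Φ(v, ξ) = (v, ξ + X v)` one has `J̃ = Φ⁻¹ ∘ (i × J) ∘ Φ`, so `J̃² = -1`
follows from `i² = -1` and `J² = -1`. The differential of the graph sends `v` to `(v, Du v)`,
which `Φ` turns into `(v, Du v + X v)`; hence `J̃`-holomorphicity of the graph is precisely the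
vortex equation `J (Du v + X v) = Du (i v) + X (i v)`. -/

section

variable {V : Type*} [NormedAddCommGroup V] [NormedSpace ℝ V]

theorem JtildeFam_JtildeFam {J : ℂ → V →L[ℝ] V} (X : ℂ → ℂ →L[ℝ] V) {z : ℂ}
    (hJ : ∀ ξ : V, J z (J z ξ) = -ξ) (p : ℂ × V) :
    JtildeFam J X z (JtildeFam J X z p) = -p := by
  have hI : Complex.I * (Complex.I * p.1) = -p.1 := by
    rw [← mul_assoc, Complex.I_mul_I, neg_one_mul]
  ext
  · simp [JtildeFam, hI]
  · simp only [JtildeFam, map_add, map_sub, hJ, hI, map_neg, Prod.snd_neg]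
    abel

theorem JtildeFam_apply_of_vortex {J : ℂ → V →L[ℝ] V} {X : ℂ → ℂ →L[ℝ] V} {z : ℂ}
    {L : ℂ →L[ℝ] V} {v : ℂ}
    (hvortex : J z (L v + X z v) = L (Complex.I * v) + X z (Complex.I * v)) :
    JtildeFam J X z (v, L v) = (Complex.I * v, L (Complex.I * v)) := by
  rw [map_add] at hvortex
  simp only [JtildeFam, hvortex, add_sub_cancel_right]

end

theorem fderiv_graph_apply {𝕜 E F : Type*} [NontriviallyNormedField 𝕜]
    [NormedAddCommGroup E] [NormedSpace 𝕜 E] [NormedAddCommGroup F] [NormedSpace 𝕜 F]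
    {u : E → F} {z : E} (hu : DifferentiableAt 𝕜 u z) (v : E) :
    fderiv 𝕜 (fun w => (w, u w)) z v = (v, fderiv 𝕜 u z v) := by
  have hgraph : HasFDerivAt (fun w => (w, u w))
      ((ContinuousLinearMap.id 𝕜 E).prod (fderiv 𝕜 u z)) z :=
    (hasFDerivAt_id z).prodMk hu.hasFDerivAt
  rw [hgraph.fderiv]
  rfl

theorem graph_of_vortex_is_Jtilde_holomorphic_general
    {V : Type*} [NormedAddCommGroup V] [NormedSpace ℝ V]
    (D : Set ℂ)
    (J : ℂ → V →L[ℝ] V) (X : ℂ → ℂ →L[ℝ] V)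
    (hJ : ∀ z ∈ D, ∀ ξ : V, J z (J z ξ) = -ξ) :
    (∀ z ∈ D, ∀ p : ℂ × V, JtildeFam J X z (JtildeFam J X z p) = -p) ∧
    (∀ u : ℂ → V, (∀ z ∈ D, DifferentiableAt ℝ u z) →
      (∀ z ∈ D, ∀ v : ℂ,
        J z (fderiv ℝ u z v + X z v) =
          fderiv ℝ u z (Complex.I * v) + X z (Complex.I * v)) →
      (∀ z ∈ D, DifferentiableAt ℝ (fun w : ℂ => ((w, u w) : ℂ × V)) z) ∧
      (∀ z ∈ D, ∀ v : ℂ,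
        fderiv ℝ (fun w : ℂ => ((w, u w) : ℂ × V)) z (Complex.I * v) =
          JtildeFam J X z (fderiv ℝ (fun w : ℂ => ((w, u w) : ℂ × V)) z v))) := by
  refine ⟨fun z hz => JtildeFam_JtildeFam X (hJ z hz), fun u hu hvortex => ⟨?_, ?_⟩⟩
  · exact fun z hz => differentiableAt_id.prodMk (hu z hz)
  · intro z hz v
    rw [fderiv_graph_apply (hu z hz), fderiv_graph_apply (hu z hz),
      JtildeFam_apply_of_vortex (hvortex z hz v)]

/-- Lemma 3.1 and the computation preceding it: (a) `J̃(z)² = -id` for `z ∈ D`, and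
(b) if `u : D → V` is differentiable and satisfies the first vortex equation
`J(z)(Du(z)v + X(z)v) = Du(z)(iv) + X(z)(iv)`, then the graph map `ũ(z) = (z, u(z))`
is differentiable and `(i, J̃)`-holomorphic: `Dũ(z)(iv) = J̃(z)(Dũ(z)v)`. -/
theorem graph_of_vortex_is_Jtilde_holomorphic
    {V : Type*} [NormedAddCommGroup V] [NormedSpace ℝ V]
    (D : Set ℂ) (hD : IsOpen D)
    (J : ℂ → V →L[ℝ] V) (X : ℂ → ℂ →L[ℝ] V)
    (hJ : ∀ z ∈ D, ∀ ξ : V, J z (J z ξ) = -ξ) :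
    (∀ z ∈ D, ∀ p : ℂ × V, JtildeFam J X z (JtildeFam J X z p) = -p) ∧
    (∀ u : ℂ → V, (∀ z ∈ D, DifferentiableAt ℝ u z) →
      (∀ z ∈ D, ∀ v : ℂ,
        J z (fderiv ℝ u z v + X z v) =
          fderiv ℝ u z (Complex.I * v) + X z (Complex.I * v)) →
      (∀ z ∈ D, DifferentiableAt ℝ (fun w : ℂ => ((w, u w) : ℂ × V)) z) ∧
      (∀ z ∈ D, ∀ v : ℂ,
        fderiv ℝ (fun w : ℂ => ((w, u w) : ℂ × V)) z (Complex.I * v) =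
          JtildeFam J X z (fderiv ℝ (fun w : ℂ => ((w, u w) : ℂ × V)) z v))) :=
  graph_of_vortex_is_Jtilde_holomorphic_general D J X hJ
end
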